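/- Let T be a positively edge-weighted tree with m vertices, taxa X the set of leaves of T with |X| = n, and square root embedding Ψ into ℝ^{m-1}. Then the distance matrix D with D_{ij} = d(x_i, x_j) (tree distances between leaves) has the property that H = -(1/2) F D F is positive semidefinite, where F = I_n - (1/n)𝟙𝟙ᵀ. -/

import Mathlib

/-!
Fix a base vertex `v`. Each edge `e` of a tree separates it into two sides, and `e` lies on the
path from `a` to `b` exactly when it lies on one but not both of the paths from `v` to `a` and
from `v` to `b`. Hence the square root embedding satisfies
`‖Ψ_v a - Ψ_v b‖² = d(a, b)`, so the leaf distance matrix is a matrix of squared Euclidean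
distances. For such a matrix and any `z` with `∑ zᵢ = 0`,
`∑ᵢⱼ zᵢ zⱼ ‖pᵢ - pⱼ‖² = -2 ‖∑ᵢ zᵢ pᵢ‖² ≤ 0`, and `F` maps every vector to one with coordinate
sum zero, so `-(1/2) F D F` is positive semidefinite.
-/

open SimpleGraph

/-- The unique path between two vertices of a tree, as a walk. -/
noncomputable def treePath {V : Type*} (G : SimpleGraph V) (hG : G.IsTree) (a b : V) :
    G.Walk a b :=
  (hG.existsUnique_path a b).choose

/-- The square root embedding with base node `v`: the coordinate of `Ψ_v u` at edge `e`
is `√(w e)` if `e` lies on the path from `v` to `u`, and `0` otherwise. -/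
noncomputable def sqrtEmbed {V : Type*} [DecidableEq V] (G : SimpleGraph V) (hG : G.IsTree)
    [Fintype G.edgeSet] (w : Sym2 V → ℝ) (v u : V) : EuclideanSpace ℝ G.edgeSet :=
  WithLp.toLp 2 (fun e : G.edgeSet => if (e : Sym2 V) ∈ (treePath G hG v u).edges then Real.sqrt (w e) else 0)

/-- The tree metric: sum of the weights of the edges on the unique path. -/
noncomputable def treeDist {V : Type*} (G : SimpleGraph V) (hG : G.IsTree)
    (w : Sym2 V → ℝ) (a b : V) : ℝ :=
  ((treePath G hG a b).edges.map w).sum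

open Matrix

namespace SimpleGraph

variable {V : Type*} {G : SimpleGraph V}

theorem Preconnected.reachable_deleteEdges_or (hG : G.Preconnected) (u u' z : V) :
    (G.deleteEdges {s(u, u')}).Reachable u z ∨ (G.deleteEdges {s(u, u')}).Reachable u' z := by
  -- Vertices reachable from `u` or `u'` in `G \ e` are closed under `G`-adjacency: the only
  -- missing edge is `e`, whose endpoints are `u` and `u'`.
  suffices ∀ {a} (p : G.Walk a z), (G.deleteEdges {s(u, u')}).Reachable u a ∨
      (G.deleteEdges {s(u, u')}).Reachable u' a →
      (G.deleteEdges {s(u, u')}).Reachable u z ∨ (G.deleteEdges {s(u, u')}).Reachable u' z from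
    this (hG u z).some (Or.inl .rfl)
  intro a p
  induction p with
  | nil => exact id
  | @cons a c _ hac _ ih =>
    refine fun ha => ih ?_
    by_cases he : s(a, c) = s(u, u')
    · rcases Sym2.eq_iff.mp he with ⟨-, rfl⟩ | ⟨-, rfl⟩
      exacts [Or.inr .rfl, Or.inl .rfl]
    · have hac' : (G.deleteEdges {s(u, u')}).Reachable a c :=
        (deleteEdges_adj.mpr ⟨hac, he⟩).reachable
      exact ha.imp (·.trans hac') (·.trans hac')

/-- Deleting one edge from a connected graph leaves at most two components. -/
theorem Preconnected.reachable_deleteEdges_of_not_reachable (hG : G.Preconnected) {e : Sym2 V}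
    {v a b : V} (ha : ¬(G.deleteEdges {e}).Reachable v a)
    (hb : ¬(G.deleteEdges {e}).Reachable v b) : (G.deleteEdges {e}).Reachable a b := by
  induction e using Sym2.ind with
  | _ u u' =>
    have side := hG.reachable_deleteEdges_or u u'
    rcases side v with hv | hv <;> rcases side a with ha' | ha' <;>
      rcases side b with hb' | hb' <;>
      first
      | exact (ha (hv.symm.trans ha')).elim
      | exact (hb (hv.symm.trans hb')).elim
      | exact ha'.symm.trans hb'

end SimpleGraph

section TreePath

variable {V : Type*} {G : SimpleGraph V}

theorem treePath_isPath (hG : G.IsTree) (a b : V) : (treePath G hG a b).IsPath :=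
  (hG.existsUnique_path a b).choose_spec.1

theorem eq_treePath (hG : G.IsTree) {a b : V} {p : G.Walk a b} (hp : p.IsPath) :
    p = treePath G hG a b :=
  (hG.existsUnique_path a b).choose_spec.2 p hp

theorem mem_treePath_edges_iff (hG : G.IsTree) (e : Sym2 V) (a b : V) :
    e ∈ (treePath G hG a b).edges ↔ ¬(G.deleteEdges {e}).Reachable a b := by
  classical
  refine ⟨fun he hab => ?_, (treePath G hG a b).mem_edges_of_not_reachable_deleteEdges⟩
  induction e using Sym2.ind with
  | _ u u' =>
    obtain ⟨p, hp⟩ := reachable_deleteEdges_iff_exists_walk.mp hab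
    rw [← eq_treePath hG p.toPath.2] at he
    exact hp (p.edges_toPath_subset_edges he)

theorem mem_treePath_edges_iff_xor (hG : G.IsTree) (e : Sym2 V) (v a b : V) :
    e ∈ (treePath G hG a b).edges ↔
      Xor (e ∈ (treePath G hG v a).edges) (e ∈ (treePath G hG v b).edges) := by
  simp only [mem_treePath_edges_iff, xor_iff_not_iff]
  set R := (G.deleteEdges {e}).Reachable
  have : ¬R v a → ¬R v b → R a b :=
    hG.connected.preconnected.reachable_deleteEdges_of_not_reachable
  have : R v a → R a b → R v b := .trans
  have : R v b → R a b → R v a := fun hvb hab => hvb.trans hab.symm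
  have : R v a → R v b → R a b := fun hva hvb => hva.symm.trans hvb
  tauto

end TreePath

theorem sum_ite_mem_list_eq_sum_map {α M : Type*} [DecidableEq α] [AddCommMonoid M] {s : Set α}
    [Fintype s] (f : α → M) {l : List α} (hl : l.Nodup) (hls : ∀ a ∈ l, a ∈ s) :
    ∑ a : s, (if (a : α) ∈ l then f a else 0) = (l.map f).sum := by
  rw [← Finset.sum_subtype s.toFinset (by simp) fun a => if a ∈ l then f a else 0,
    ← Finset.sum_filter, ← List.sum_toFinset f hl]
  congr 1
  ext a
  simpa using hls a

section SqrtEmbedding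

variable {V : Type*} [DecidableEq V] {G : SimpleGraph V} (hG : G.IsTree) [Fintype G.edgeSet]
  {w : Sym2 V → ℝ}

theorem norm_sqrtEmbed_sub_sq (hw : ∀ e ∈ G.edgeSet, 0 ≤ w e) (v a b : V) :
    ‖sqrtEmbed G hG w v a - sqrtEmbed G hG w v b‖ ^ 2 = treeDist G hG w a b := by
  have coord_sq (e : G.edgeSet) : (sqrtEmbed G hG w v a - sqrtEmbed G hG w v b) e ^ 2 =
      if (e : Sym2 V) ∈ (treePath G hG a b).edges then w e else 0 := by
    by_cases ha : (e : Sym2 V) ∈ (treePath G hG v a).edges <;>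
      by_cases hb : (e : Sym2 V) ∈ (treePath G hG v b).edges <;>
      simp [sqrtEmbed, mem_treePath_edges_iff_xor hG _ v a b, ha, hb, Real.sq_sqrt (hw e e.2)]
  rw [EuclideanSpace.real_norm_sq_eq, Fintype.sum_congr _ _ coord_sq]
  exact sum_ite_mem_list_eq_sum_map w (treePath_isPath hG a b).edges_nodup
    fun _ he => (treePath G hG a b).edges_subset_edgeSet he

end SqrtEmbedding

open scoped InnerProductSpace in
theorem sum_sum_mul_mul_norm_sub_sq {ι E : Type*} [Fintype ι] [NormedAddCommGroup E]
    [InnerProductSpace ℝ E] (p : ι → E) {z : ι → ℝ} (hz : ∑ i, z i = 0) :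
    ∑ i, ∑ j, z i * z j * ‖p i - p j‖ ^ 2 = -2 * ‖∑ i, z i • p i‖ ^ 2 := by
  have gram : ‖∑ i, z i • p i‖ ^ 2 = ∑ i, ∑ j, z i * z j * ⟪p i, p j⟫_ℝ := by
    simp only [← real_inner_self_eq_norm_sq, sum_inner, inner_sum, real_inner_smul_left,
      real_inner_smul_right, mul_assoc]
    exact Finset.sum_congr rfl fun i _ => Finset.sum_congr rfl fun j _ => by rw [real_inner_comm]
  have expand (i j : ι) : z i * z j * ‖p i - p j‖ ^ 2 =
      z j * (z i * ‖p i‖ ^ 2) + z i * (z j * ‖p j‖ ^ 2) - 2 * (z i * z j * ⟪p i, p j⟫_ℝ) := by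
    rw [norm_sub_sq_real]
    ring
  simp only [expand, Finset.sum_sub_distrib, Finset.sum_add_distrib, ← Finset.sum_mul,
    ← Finset.mul_sum, hz, gram]
  ring

section DoubleCentering

variable {ι : Type*} [Fintype ι] [DecidableEq ι] {E : Type*} [NormedAddCommGroup E]
  [InnerProductSpace ℝ E]

variable (ι) in
noncomputable def centeringMatrix : Matrix ι ι ℝ :=
  1 - (Fintype.card ι : ℝ)⁻¹ • of fun _ _ => 1

noncomputable def doubleCentering (D : Matrix ι ι ℝ) : Matrix ι ι ℝ :=
  (-(1 / 2) : ℝ) • (centeringMatrix ι * D * centeringMatrix ι)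

theorem transpose_centeringMatrix : (centeringMatrix ι)ᵀ = centeringMatrix ι := by
  ext i j
  simp [centeringMatrix, one_apply, eq_comm]

theorem sum_centeringMatrix_mulVec (y : ι → ℝ) : ∑ i, (centeringMatrix ι *ᵥ y) i = 0 := by
  rcases isEmpty_or_nonempty ι with hι | hι
  · simp
  have hcoord (i : ι) :
      (centeringMatrix ι *ᵥ y) i = y i - (Fintype.card ι : ℝ)⁻¹ * ∑ j, y j := by
    simp [centeringMatrix, mulVec, dotProduct, sub_mul, one_apply, Finset.mul_sum]
  rw [Fintype.sum_congr _ _ hcoord, Finset.sum_sub_distrib, Finset.sum_const, Finset.card_univ,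
    nsmul_eq_mul, mul_inv_cancel_left₀ (Nat.cast_ne_zero.mpr Fintype.card_ne_zero), sub_self]

theorem posSemidef_doubleCentering {D : Matrix ι ι ℝ} (hD : D.IsSymm)
    (hneg : ∀ z : ι → ℝ, ∑ i, z i = 0 → z ⬝ᵥ D *ᵥ z ≤ 0) : (doubleCentering D).PosSemidef := by
  refine .of_dotProduct_mulVec_nonneg ?_ fun y => ?_
  · rw [IsHermitian, conjTranspose_eq_transpose_of_trivial, doubleCentering, transpose_smul,
      transpose_mul, transpose_mul, transpose_centeringMatrix, hD.eq, Matrix.mul_assoc]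
  · set z := centeringMatrix ι *ᵥ y
    have hquad : star y ⬝ᵥ doubleCentering D *ᵥ y = -(1 / 2) * (z ⬝ᵥ D *ᵥ z) := by
      rw [doubleCentering, smul_mulVec, ← mulVec_mulVec, ← mulVec_mulVec, dotProduct_smul,
        star_trivial, smul_eq_mul, dotProduct_mulVec y, ← mulVec_transpose,
        transpose_centeringMatrix]
    rw [hquad]
    linarith [hneg _ (sum_centeringMatrix_mulVec y)]

/-- The easy direction of Schoenberg's theorem. -/
theorem posSemidef_doubleCentering_norm_sub_sq (p : ι → E) :
    (doubleCentering (of fun i j => ‖p i - p j‖ ^ 2)).PosSemidef := by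
  refine posSemidef_doubleCentering ?_ fun z hz => ?_
  · exact IsSymm.ext fun i j => by simp [norm_sub_rev]
  · calc z ⬝ᵥ (of fun i j => ‖p i - p j‖ ^ 2) *ᵥ z
          = ∑ i, ∑ j, z i * z j * ‖p i - p j‖ ^ 2 := by
            rw [dot_mulVec_eq_sum_sum, Finset.sum_comm]
            simp only [of_apply, mul_right_comm]
      _ = -2 * ‖∑ i, z i • p i‖ ^ 2 := sum_sum_mul_mul_norm_sub_sq p hz
      _ ≤ 0 := by nlinarith [sq_nonneg ‖∑ i, z i • p i‖]

end DoubleCentering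

theorem tree_mds_posSemidef_general {V : Type*} [DecidableEq V] (G : SimpleGraph V) (hG : G.IsTree)
    [Fintype G.edgeSet] (w : Sym2 V → ℝ) (hw : ∀ e ∈ G.edgeSet, 0 < w e)
    (n : ℕ) (x : Fin n → V)
    (D F H : Matrix (Fin n) (Fin n) ℝ)
    (hD : ∀ i j, D i j = treeDist G hG w (x i) (x j))
    (hF : F = 1 - (n : ℝ)⁻¹ • Matrix.of (fun _ _ => (1 : ℝ)))
    (hH : H = (-(1 / 2) : ℝ) • (F * D * F)) :
    H.PosSemidef := by
  obtain ⟨v⟩ := hG.connected.nonempty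
  have hD' : D = of fun i j => ‖sqrtEmbed G hG w v (x i) - sqrtEmbed G hG w v (x j)‖ ^ 2 := by
    ext i j
    rw [hD, of_apply, norm_sqrtEmbed_sub_sq hG fun e he => (hw e he).le]
  have hF' : F = centeringMatrix (Fin n) := by
    rw [hF, centeringMatrix, Fintype.card_fin]
  subst hH hF' hD'
  exact posSemidef_doubleCentering_norm_sub_sq _

/-- for the matrix `D` of tree distances between the `n` leaves of a
positively edge-weighted tree, the doubly centered matrix `H = -(1/2) F D F` is positive
semidefinite. -/
theorem tree_mds_posSemidef {V : Type*} [DecidableEq V] (G : SimpleGraph V) (hG : G.IsTree)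
    [Fintype G.edgeSet] (w : Sym2 V → ℝ) (hw : ∀ e ∈ G.edgeSet, 0 < w e)
    (n : ℕ) (hn : 0 < n) (x : Fin n → V) (hinj : Function.Injective x)
    (hleaf : Set.range x = {u : V | ∃! u' : V, G.Adj u u'})
    (D F H : Matrix (Fin n) (Fin n) ℝ)
    (hD : ∀ i j, D i j = treeDist G hG w (x i) (x j))
    (hF : F = 1 - (n : ℝ)⁻¹ • Matrix.of (fun _ _ => (1 : ℝ)))
    (hH : H = (-(1 / 2) : ℝ) • (F * D * F)) :
    H.PosSemidef :=
  tree_mds_posSemidef_general G hG w hw n x D F H hD hF hH
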